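/- arXiv:2404.12418 — 3 statements merged into one kernel-verified Lean document; each statement's English description precedes it below -/
import Mathlib

section
/- Let ε > 0 and let p : ℕ → [0,1] satisfy n·p(n) ≤ (1−ε)·log n for all large n. Then the probability that the Erdős–Rényi random graph G(n, p(n)) contains at least one isolated vertex (a vertex with no neighbors) tends to 1 as n → ∞; in particular, with probability tending to 1, G(n, p(n)) is not connected. -/
open scoped Classical

/-- The number of edges of a simple graph on `Fin n`. -/
noncomputable def edgeCount {n : ℕ} (g : SimpleGraph (Fin n)) : ℕ := g.edgeSet.ncard

/-- The probability, under the Erdős–Rényi model `G(n,p)` (each of the `C(n,2)` possible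
edges present independently with probability `p`), of a set `E` of graphs on `[n]`. -/
noncomputable def erProb (n : ℕ) (p : ℝ) (E : Set (SimpleGraph (Fin n))) : ℝ :=
  ∑ g ∈ Finset.univ.filter (fun g : SimpleGraph (Fin n) => g ∈ E),
    p ^ edgeCount g * (1 - p) ^ (n.choose 2 - edgeCount g)

/-!
The number `X` of isolated vertices of `G(n,p)` has mean `n (1-p)^(n-1)` and second moment
`n (1-p)^(n-1) + n (n-1) (1-p)^(2n-3)`, since two distinct vertices are isolated exactly when
the `2n-3` edges at them are absent. Cauchy–Schwarz on the event `X ≠ 0` (the second moment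
method) gives `P(X ≠ 0) ≥ (EX)² / EX² ≥ ((EX)⁻¹ + (1-p)⁻¹)⁻¹`. Under `n p ≤ (1-ε) log n` we have
`p → 0` and `log EX ≥ log n - n p / (1-p) ≥ (ε + o(1)) log n`, so `EX → ∞` and the bound tends
to `1`. A graph on at least two vertices with an isolated vertex is disconnected.
-/

open Finset Filter Topology SimpleGraph

lemma sum_powerset_sdiff_pow_mul_one_sub_pow {ι : Type*} [DecidableEq ι] {s t : Finset ι}
    (hts : t ⊆ s) (p : ℝ) :
    ∑ u ∈ (s \ t).powerset, p ^ #u * (1 - p) ^ (#s - #u) = (1 - p) ^ #t := by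
  have hcard := card_sdiff_add_card_eq_card hts
  calc ∑ u ∈ (s \ t).powerset, p ^ #u * (1 - p) ^ (#s - #u)
      = ∑ u ∈ (s \ t).powerset, p ^ #u * (1 - p) ^ (#(s \ t) - #u) * (1 - p) ^ #t := by
        refine sum_congr rfl fun u hu => ?_
        have := card_le_card (mem_powerset.1 hu)
        rw [mul_assoc, ← pow_add]
        congr 2
        omega
    _ = (1 - p) ^ #t := by rw [← sum_mul, sum_pow_mul_eq_add_pow]; simp

lemma Finset.sq_sum_mul_le_sum_filter_ne_zero_mul_sum_mul_sq {ι : Type*} (s : Finset ι)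
    {w X : ι → ℝ} (hw : ∀ i ∈ s, 0 ≤ w i) :
    (∑ i ∈ s, w i * X i) ^ 2 ≤ (∑ i ∈ s with X i ≠ 0, w i) * ∑ i ∈ s, w i * X i ^ 2 := by
  have hsupp : ∀ {f : ι → ℝ}, (∀ i, X i = 0 → f i = 0) →
      ∑ i ∈ s with X i ≠ 0, f i = ∑ i ∈ s, f i := fun hf =>
    sum_filter_of_ne fun i _ hfi hXi => hfi (hf i hXi)
  rw [← hsupp (f := fun i => w i * X i) (by simp_all),
    ← hsupp (f := fun i => w i * X i ^ 2) (by simp_all)]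
  refine sum_sq_le_sum_mul_sum_of_sq_le_mul _ (fun i hi => hw i (mem_filter.1 hi).1)
    (fun i hi => mul_nonneg (hw i (mem_filter.1 hi).1) (sq_nonneg _)) fun i _ => le_of_eq ?_
  ring

lemma tendsto_zero_of_natCast_mul_le_mul_log {p : ℕ → ℝ} {C : ℝ} (hp : ∀ n, 0 ≤ p n)
    (h : ∀ᶠ n : ℕ in atTop, n * p n ≤ C * Real.log n) : Tendsto p atTop (𝓝 0) := by
  have hlog : Tendsto (fun n : ℕ => C * (Real.log n / n)) atTop (𝓝 0) := by
    simpa using ((Real.tendsto_pow_log_div_mul_add_atTop 1 0 1 one_ne_zero).comp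
      tendsto_natCast_atTop_atTop).const_mul C
  refine tendsto_of_tendsto_of_tendsto_of_le_of_le' tendsto_const_nhds hlog
    (Eventually.of_forall hp) ?_
  filter_upwards [h, eventually_gt_atTop 0] with n hn hn0
  rw [mul_div_assoc', le_div_iff₀ (by positivity)]
  linarith

lemma Real.log_sub_mul_div_le_log_mul_one_sub_pow {n : ℕ} (hn : 0 < n) {p : ℝ}
    (hp : p ∈ Set.Ico 0 1) :
    Real.log n - n * p / (1 - p) ≤ Real.log (n * (1 - p) ^ (n - 1)) := by
  have hq : 0 < 1 - p := sub_pos.2 hp.2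
  have hlogq : -(p / (1 - p)) ≤ Real.log (1 - p) := by
    have := Real.one_sub_inv_le_log_of_pos hq
    rwa [show 1 - (1 - p)⁻¹ = -(p / (1 - p)) by field_simp; ring] at this
  have hn' : ((n - 1 : ℕ) : ℝ) ≤ n := by exact_mod_cast n.sub_le 1
  have hx : 0 ≤ p / (1 - p) := div_nonneg hp.1 hq.le
  rw [Real.log_mul (by positivity) (by positivity), Real.log_pow, mul_div_assoc]
  nlinarith [mul_le_mul_of_nonneg_left hlogq (Nat.cast_nonneg (n - 1) : (0 : ℝ) ≤ _),
    mul_le_mul_of_nonneg_right hn' hx]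

lemma tendsto_natCast_mul_one_sub_pow_atTop {ε : ℝ} (hε : 0 < ε) {p : ℕ → ℝ}
    (hp : ∀ n, 0 ≤ p n) (h : ∀ᶠ n : ℕ in atTop, n * p n ≤ (1 - ε) * Real.log n) :
    Tendsto (fun n : ℕ => n * (1 - p n) ^ (n - 1)) atTop atTop := by
  have hp0 := tendsto_zero_of_natCast_mul_le_mul_log hp h
  have hp1 : ∀ᶠ n in atTop, p n < 1 := hp0.eventually (gt_mem_nhds one_pos)
  have hc : Tendsto (fun n => 1 - (1 - ε) / (1 - p n)) atTop (𝓝 ε) := by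
    simpa using (tendsto_const_nhds (x := (1 : ℝ))).sub ((tendsto_const_nhds (x := 1 - ε)).div
      (tendsto_const_nhds.sub hp0) (by norm_num : (1 : ℝ) - 0 ≠ 0))
  have hlog : Tendsto (fun n : ℕ => Real.log (n * (1 - p n) ^ (n - 1))) atTop atTop := by
    refine tendsto_atTop_mono' _ ?_
      ((Real.tendsto_log_atTop.comp tendsto_natCast_atTop_atTop).atTop_mul_pos hε hc)
    filter_upwards [h, hp1, eventually_gt_atTop 0] with n hn hpn hn0
    have hq : 0 < 1 - p n := sub_pos.2 hpn
    calc Real.log n * (1 - (1 - ε) / (1 - p n))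
        = Real.log n - (1 - ε) * Real.log n / (1 - p n) := by ring
      _ ≤ Real.log n - n * p n / (1 - p n) := by gcongr
      _ ≤ _ := Real.log_sub_mul_div_le_log_mul_one_sub_pow hn0 ⟨hp n, hpn⟩
  refine (Real.tendsto_exp_atTop.comp hlog).congr' ?_
  filter_upwards [hp1, eventually_gt_atTop 0] with n hpn hn0
  have hq : 0 < 1 - p n := sub_pos.2 hpn
  exact Real.exp_log (by positivity)

namespace SimpleGraph

variable {V : Type*}

lemma edgeSet_fromEdgeSet_of_subset {s : Set (Sym2 V)} (hs : s ⊆ (⊤ : SimpleGraph V).edgeSet) :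
    (fromEdgeSet s).edgeSet = s :=
  (edgeSet_eq_iff _ _).2 ⟨rfl, Set.subset_compl_iff_disjoint_right.1 (edgeSet_top (V := V) ▸ hs)⟩

lemma isIsolated_iff_disjoint_edgeSet (G : SimpleGraph V) (v : V) :
    G.IsIsolated v ↔ Disjoint G.edgeSet ((⊤ : SimpleGraph V).incidenceSet v) := by
  rw [Set.disjoint_left]
  constructor
  · rintro hv e he ⟨-, hve⟩
    obtain ⟨w, rfl⟩ := Sym2.mem_iff_exists.1 hve
    exact hv w he
  · intro h w hvw
    exact h hvw ⟨(top_adj v w).2 hvw.ne, Sym2.mem_mk_left v w⟩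

variable [Fintype V] [DecidableEq V]

lemma card_incidenceFinset_top (v : V) :
    #((⊤ : SimpleGraph V).incidenceFinset v) = Fintype.card V - 1 := by
  simp

lemma card_incidenceFinset_top_union {u v : V} (huv : u ≠ v) :
    #((⊤ : SimpleGraph V).incidenceFinset u ∪ (⊤ : SimpleGraph V).incidenceFinset v) =
      2 * Fintype.card V - 3 := by
  have hinter : (⊤ : SimpleGraph V).incidenceFinset u ∩ (⊤ : SimpleGraph V).incidenceFinset v =
      {s(u, v)} :=
    coe_injective <| by
      push_cast
      exact incidenceSet_inter_incidenceSet_of_adj _ ((top_adj u v).2 huv)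
  have hcard := card_union_add_card_inter ((⊤ : SimpleGraph V).incidenceFinset u)
    ((⊤ : SimpleGraph V).incidenceFinset v)
  rw [hinter, card_incidenceFinset_top, card_incidenceFinset_top, card_singleton] at hcard
  have : 2 ≤ Fintype.card V := Fintype.one_lt_card_iff.2 ⟨u, v, huv⟩
  omega

end SimpleGraph

noncomputable def erWeight (n : ℕ) (p : ℝ) (g : SimpleGraph (Fin n)) : ℝ :=
  p ^ edgeCount g * (1 - p) ^ (n.choose 2 - edgeCount g)

section ErdosRenyi

variable {n : ℕ} {p : ℝ}

lemma erProb_eq_sum_ite (E : Set (SimpleGraph (Fin n))) :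
    erProb n p E = ∑ g, if g ∈ E then erWeight n p g else 0 :=
  sum_filter _ _

lemma erWeight_nonneg (hp : p ∈ Set.Icc 0 1) (g : SimpleGraph (Fin n)) : 0 ≤ erWeight n p g :=
  mul_nonneg (pow_nonneg hp.1 _) (pow_nonneg (sub_nonneg.2 hp.2) _)

lemma edgeCount_eq_card_edgeFinset (g : SimpleGraph (Fin n)) : edgeCount g = #g.edgeFinset := by
  rw [edgeCount, ← coe_edgeFinset, Set.ncard_coe_finset]

/-- `g ↦ g.edgeFinset` identifies the graphs in this event with the subsets of
`(⊤ : SimpleGraph (Fin n)).edgeFinset \ T`, turning `erProb` into a binomial sum. -/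
lemma erProb_disjoint_edgeSet {T : Finset (Sym2 (Fin n))}
    (hT : T ⊆ (⊤ : SimpleGraph (Fin n)).edgeFinset) :
    erProb n p {g | Disjoint g.edgeSet T} = (1 - p) ^ #T := by
  have hK : ∀ {s}, s ⊆ (⊤ : SimpleGraph (Fin n)).edgeFinset →
      (fromEdgeSet (s : Set (Sym2 (Fin n)))).edgeSet = s := fun hs =>
    edgeSet_fromEdgeSet_of_subset (by rw [← coe_edgeFinset]; exact coe_subset.2 hs)
  rw [← sum_powerset_sdiff_pow_mul_one_sub_pow hT p, card_edgeFinset_top_eq_card_choose_two,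
    Fintype.card_fin, erProb]
  refine sum_nbij' (fun g => g.edgeFinset) (fun s => fromEdgeSet s) ?_ ?_ ?_ ?_ ?_
  · intro g hg
    refine mem_powerset.2 (subset_sdiff.2 ⟨edgeFinset_mono le_top, ?_⟩)
    rw [← disjoint_coe, coe_edgeFinset]
    exact (mem_filter.1 hg).2
  · intro s hs
    obtain ⟨hs, hsT⟩ := subset_sdiff.1 (mem_powerset.1 hs)
    refine mem_filter.2 ⟨mem_univ _, ?_⟩
    change Disjoint _ _
    rwa [hK hs, disjoint_coe]
  · intro g _
    simp
  · intro s hs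
    exact coe_injective (by rw [coe_edgeFinset, hK (mem_powerset.1 hs |>.trans sdiff_subset)])
  · intro g _
    simp only [edgeCount_eq_card_edgeFinset]

lemma erProb_univ : erProb n p Set.univ = 1 := by
  simpa using erProb_disjoint_edgeSet (n := n) (p := p) (empty_subset _)

lemma erProb_nonneg (hp : p ∈ Set.Icc 0 1) (E : Set (SimpleGraph (Fin n))) : 0 ≤ erProb n p E :=
  sum_nonneg fun g _ => erWeight_nonneg hp g

lemma erProb_mono (hp : p ∈ Set.Icc 0 1) {E F : Set (SimpleGraph (Fin n))} (hEF : E ⊆ F) :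
    erProb n p E ≤ erProb n p F :=
  sum_le_sum_of_subset_of_nonneg (monotone_filter_right _ fun g _ => @hEF g)
    fun g _ _ => erWeight_nonneg hp g

lemma erProb_le_one (hp : p ∈ Set.Icc 0 1) (E : Set (SimpleGraph (Fin n))) : erProb n p E ≤ 1 :=
  erProb_univ (n := n) ▸ erProb_mono hp (Set.subset_univ E)

lemma sum_erWeight_mul_card_filter {ι : Type*} [Fintype ι] (P : ι → SimpleGraph (Fin n) → Prop)
    [∀ g, DecidablePred (P · g)] :
    ∑ g, erWeight n p g * #{i | P i g} = ∑ i, erProb n p {g | P i g} := by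
  simp_rw [natCast_card_filter, mul_sum, erProb_eq_sum_ite, mul_ite, mul_one, mul_zero]
  rw [sum_comm]
  congr!

lemma erProb_isIsolated (v : Fin n) : erProb n p {g | g.IsIsolated v} = (1 - p) ^ (n - 1) := by
  simp_rw [isIsolated_iff_disjoint_edgeSet, ← coe_incidenceFinset]
  rw [erProb_disjoint_edgeSet (incidenceFinset_subset _ _), card_incidenceFinset_top,
    Fintype.card_fin]

lemma erProb_isIsolated_and_isIsolated (u v : Fin n) :
    erProb n p {g | g.IsIsolated u ∧ g.IsIsolated v} =
      (1 - p) ^ #((⊤ : SimpleGraph (Fin n)).incidenceFinset u ∪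
        (⊤ : SimpleGraph (Fin n)).incidenceFinset v) := by
  simp_rw [isIsolated_iff_disjoint_edgeSet, ← coe_incidenceFinset, ← Set.disjoint_union_right,
    ← coe_union]
  exact erProb_disjoint_edgeSet
    (union_subset (incidenceFinset_subset _ _) (incidenceFinset_subset _ _))

lemma sum_erWeight_mul_card_isIsolated :
    ∑ g, erWeight n p g * #{v | g.IsIsolated v} = n * (1 - p) ^ (n - 1) := by
  simp [sum_erWeight_mul_card_filter, erProb_isIsolated]

lemma sum_erWeight_mul_card_isIsolated_sq :
    ∑ g, erWeight n p g * (#{v | g.IsIsolated v} : ℝ) ^ 2 =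
      n * (1 - p) ^ (n - 1) + (n * (n - 1) : ℕ) * (1 - p) ^ (2 * n - 3) := by
  have hsq (g : SimpleGraph (Fin n)) : (#{v | g.IsIsolated v} : ℝ) ^ 2 =
      #{x : Fin n × Fin n | g.IsIsolated x.1 ∧ g.IsIsolated x.2} := by
    rw [sq, ← Nat.cast_mul, ← card_product, ← filter_product, univ_product_univ]
  have hrow (u : Fin n) : ∑ v, (1 - p) ^ #((⊤ : SimpleGraph (Fin n)).incidenceFinset u ∪
      (⊤ : SimpleGraph (Fin n)).incidenceFinset v) =
        (1 - p) ^ (n - 1) + (n - 1 : ℕ) * (1 - p) ^ (2 * n - 3) := by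
    rw [← add_sum_erase _ _ (mem_univ u), union_self, card_incidenceFinset_top,
      sum_congr rfl fun v hv => by rw [card_incidenceFinset_top_union (ne_of_mem_erase hv).symm],
      sum_const, card_erase_of_mem (mem_univ u), card_univ, Fintype.card_fin, nsmul_eq_mul]
  simp_rw [hsq]
  rw [sum_erWeight_mul_card_filter]
  simp_rw [Fintype.sum_prod_type, erProb_isIsolated_and_isIsolated, hrow, sum_add_distrib]
  simp only [sum_const, card_univ, Fintype.card_fin, nsmul_eq_mul, Nat.cast_mul]
  ring

lemma sq_mul_one_sub_pow_le_erProb_exists_isIsolated_mul (hp : p ∈ Set.Icc 0 1) :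
    (n * (1 - p) ^ (n - 1)) ^ 2 ≤ erProb n p {g | ∃ v, g.IsIsolated v} *
      (n * (1 - p) ^ (n - 1) + (n * (n - 1) : ℕ) * (1 - p) ^ (2 * n - 3)) := by
  rw [← sum_erWeight_mul_card_isIsolated_sq, ← sum_erWeight_mul_card_isIsolated]
  convert sq_sum_mul_le_sum_filter_ne_zero_mul_sum_mul_sq univ fun g _ => erWeight_nonneg hp g
  rw [erProb_eq_sum_ite, sum_filter]
  congr! 2 with g
  simp

lemma inv_add_inv_inv_le_erProb_exists_isIsolated (hn : 2 ≤ n) (hp : p ∈ Set.Ico 0 1) :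
    ((n * (1 - p) ^ (n - 1))⁻¹ + (1 - p)⁻¹)⁻¹ ≤ erProb n p {g | ∃ v, g.IsIsolated v} := by
  have hq : 0 < 1 - p := sub_pos.2 hp.2
  have hA : 0 < (n : ℝ) * (1 - p) ^ (n - 1) := by
    have : (0 : ℝ) < n := by exact_mod_cast (by omega : 0 < n)
    positivity
  have hpairs : ((n * (n - 1) : ℕ) : ℝ) * (1 - p) ^ (2 * n - 3) ≤
      (n * (1 - p) ^ (n - 1)) ^ 2 / (1 - p) := by
    obtain ⟨k, rfl⟩ := Nat.exists_eq_add_of_le' hn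
    rw [le_div_iff₀ hq, show 2 * (k + 2) - 3 = 2 * k + 1 by omega,
      show k + 2 - 1 = k + 1 by omega]
    have hpow : (1 - p) ^ (2 * k + 1) * (1 - p) = ((1 - p) ^ (k + 1)) ^ 2 := by ring
    push_cast
    rw [mul_assoc, hpow]
    nlinarith [sq_nonneg ((1 - p) ^ (k + 1))]
  have key := sq_mul_one_sub_pow_le_erProb_exists_isIsolated_mul (n := n) ⟨hp.1, hp.2.le⟩
  set A := (n : ℝ) * (1 - p) ^ (n - 1)
  calc (A⁻¹ + (1 - p)⁻¹)⁻¹ = A ^ 2 / (A + A ^ 2 / (1 - p)) := by field_simp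
    _ ≤ erProb n p {g | ∃ v, g.IsIsolated v} := by
      rw [div_le_iff₀ (by positivity)]
      exact key.trans (mul_le_mul_of_nonneg_left (by linarith) (erProb_nonneg ⟨hp.1, hp.2.le⟩ _))

end ErdosRenyi

/-- If `n·p(n) ≤ (1−ε)·log n` for all large `n`, then with probability tending to `1`,
the Erdős–Rényi graph `G(n, p(n))` contains an isolated vertex, and in particular is
not connected, with probability tending to `1`. -/
theorem stmt_0 (ε : ℝ) (hε : 0 < ε) (p : ℕ → ℝ)
    (hp : ∀ n, p n ∈ Set.Icc (0 : ℝ) 1)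
    (h : ∀ᶠ (n : ℕ) in Filter.atTop, (n : ℝ) * p n ≤ (1 - ε) * Real.log n) :
    Filter.Tendsto
      (fun n => erProb n (p n) {g : SimpleGraph (Fin n) | ∃ v, ∀ w, ¬ g.Adj v w})
      Filter.atTop (nhds 1)
    ∧ Filter.Tendsto
      (fun n => erProb n (p n) {g : SimpleGraph (Fin n) | ¬ g.Connected})
      Filter.atTop (nhds 1) := by
  have hp0 : ∀ n, 0 ≤ p n := fun n => (hp n).1
  have hp_lim := tendsto_zero_of_natCast_mul_le_mul_log hp0 h
  have hbound : Tendsto (fun n : ℕ => ((n * (1 - p n) ^ (n - 1))⁻¹ + (1 - p n)⁻¹)⁻¹)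
      atTop (𝓝 1) := by
    simpa using ((tendsto_natCast_mul_one_sub_pow_atTop hε hp0 h).inv_tendsto_atTop.add
      ((tendsto_const_nhds.sub hp_lim).inv₀ (by norm_num))).inv₀ (by norm_num)
  have hisolated : Tendsto (fun n => erProb n (p n) {g | ∃ v, g.IsIsolated v}) atTop (𝓝 1) := by
    refine tendsto_of_tendsto_of_tendsto_of_le_of_le' hbound tendsto_const_nhds ?_
      (Eventually.of_forall fun n => erProb_le_one (hp n) _)
    filter_upwards [eventually_ge_atTop 2, hp_lim.eventually (gt_mem_nhds one_pos)] with n hn hpn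
    exact inv_add_inv_inv_le_erProb_exists_isIsolated hn ⟨hp0 n, hpn⟩
  refine ⟨hisolated, tendsto_of_tendsto_of_tendsto_of_le_of_le' hisolated tendsto_const_nhds ?_
    (Eventually.of_forall fun n => erProb_le_one (hp n) _)⟩
  filter_upwards [eventually_ge_atTop 2] with n hn
  have : Nontrivial (Fin n) := Fin.nontrivial_iff_two_le.2 hn
  exact erProb_mono (hp n) fun g ⟨v, hv⟩ hg => hg.preconnected.not_isIsolated v hv
end

section
/- Let ε > 0 and let p : ℕ → [0,1] satisfy n·p(n) ≥ (1+ε)·log n for all large n. Then the sum S(n) = Σ_{k=1}^{⌊n/2⌋} C(n,k)·(1−p(n))^{k(n−k)} tends to 0 as n → ∞. (S(n) is the expected number of nontrivial zero-cuts of G(n,p(n)), i.e. partitions of [n] into two nonempty sets crossed by no edge, so this implies that G(n,p(n)) is connected with high probability.) -/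
open Filter Finset Real Topology

set_option maxHeartbeats 1000000

private lemma aux_choose_le_two_pow (n k : ℕ) : n.choose k ≤ 2 ^ n := by
  rcases le_or_gt k n with hk | hk
  · calc n.choose k ≤ ∑ m ∈ Finset.range (n + 1), n.choose m :=
        Finset.single_le_sum (fun _ _ => Nat.zero_le _) (Finset.mem_range.2 (by omega))
      _ = 2 ^ n := Nat.sum_range_choose n
  · rw [Nat.choose_eq_zero_of_lt hk]; exact Nat.zero_le _

/-- If `n·p(n) ≥ (1+ε)·log n` for all large `n`, then the expected number of nontrivial
zero-cuts `S(n) = Σ_{k=1}^{⌊n/2⌋} C(n,k)·(1−p(n))^{k(n−k)}` tends to `0` as `n → ∞`. -/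
theorem stmt_6 (ε : ℝ) (hε : 0 < ε) (p : ℕ → ℝ)
    (hp : ∀ n, p n ∈ Set.Icc (0 : ℝ) 1)
    (h : ∀ᶠ (n : ℕ) in Filter.atTop, (1 + ε) * Real.log n ≤ (n : ℝ) * p n) :
    Filter.Tendsto
      (fun n : ℕ => ∑ k ∈ Finset.Icc 1 (n / 2),
        (n.choose k : ℝ) * (1 - p n) ^ (k * (n - k)))
      Filter.atTop (nhds 0) := by
  have hε2 : (0:ℝ) < 1 + ε := by linarith
  set c : ℝ := ε / (2 * (1 + ε)) with hc
  have hc0 : 0 < c := by positivity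
  have hcc : c * (1 + ε) = ε / 2 := by
    rw [hc]; field_simp
  have hlogT : Tendsto (fun n : ℕ => Real.log n) atTop atTop :=
    Real.tendsto_log_atTop.comp tendsto_natCast_atTop_atTop
  apply squeeze_zero'
    (g := fun n : ℕ => 2 * Real.exp (-(ε/2) * Real.log n) + Real.exp (-(n:ℝ)))
  · filter_upwards [] with n
    apply Finset.sum_nonneg
    intro k _
    have hq0 : (0:ℝ) ≤ 1 - p n := by linarith [(hp n).2]
    exact mul_nonneg (Nat.cast_nonneg _) (pow_nonneg hq0 _)
  · filter_upwards [h, hlogT.eventually_ge_atTop (12/ε), eventually_ge_atTop 1]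
      with n hpn hlogn hn1
    have hN0 : (0:ℝ) < (n:ℝ) := by exact_mod_cast hn1
    set N := (n:ℝ) with hNdef
    set L := Real.log N with hLdef
    have hL0 : 0 ≤ L := le_trans (by positivity) hlogn
    have h12 : (12:ℝ) ≤ ε * L := by
      rw [div_le_iff₀ hε] at hlogn; linarith
    have hp0 : 0 ≤ p n := (hp n).1
    have hp1 : p n ≤ 1 := (hp n).2
    have hq0 : (0:ℝ) ≤ 1 - p n := by linarith
    have hNL : N = Real.exp L := (Real.exp_log hN0).symm
    set r := Real.exp (-(ε/2) * L) with hr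
    have hr0 : 0 ≤ r := (Real.exp_pos _).le
    have hrhalf : r ≤ 1/2 := by
      have h1 : (1:ℝ) ≤ ε/2 * L := by linarith
      have h2 : (2:ℝ) ≤ Real.exp 1 := by linarith [Real.add_one_le_exp (1:ℝ)]
      calc r ≤ Real.exp (-1) := Real.exp_le_exp.2 (by linarith)
        _ ≤ 1/2 := by
          rw [Real.exp_neg]
          calc (Real.exp 1)⁻¹ ≤ (2:ℝ)⁻¹ := inv_anti₀ (by norm_num) h2
            _ = 1/2 := by norm_num
    -- per-term bound
    have hterm : ∀ k ∈ Finset.Icc 1 (n/2),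
        (n.choose k : ℝ) * (1 - p n) ^ (k * (n - k)) ≤ r ^ k + Real.exp (-(2*N)) := by
      intro k hk
      obtain ⟨hk1, hk2⟩ := Finset.mem_Icc.mp hk
      have hkn : k ≤ n := le_trans hk2 (Nat.div_le_self n 2)
      have hk2' : 2 * k ≤ n := by omega
      have hKN : (k:ℝ) ≤ N / 2 := by
        have h2k : ((2*k:ℕ):ℝ) ≤ (n:ℝ) := by exact_mod_cast hk2'
        push_cast at h2k
        rw [hNdef]; linarith
      have hK0 : (0:ℝ) ≤ (k:ℝ) := Nat.cast_nonneg k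
      have hcast : ((k * (n - k) : ℕ) : ℝ) = (k:ℝ) * (N - (k:ℝ)) := by
        have : ((n - k : ℕ) : ℝ) = N - (k:ℝ) := by
          push_cast [Nat.cast_sub hkn]; ring
        push_cast [this]; ring
      have hqexp : (1 - p n) ^ (k * (n-k)) ≤ Real.exp (-(p n) * ((k:ℝ) * (N - (k:ℝ)))) := by
        calc (1 - p n) ^ (k*(n-k)) ≤ Real.exp (-(p n)) ^ (k*(n-k)) := by
              apply pow_le_pow_left₀ hq0
              linarith [Real.add_one_le_exp (-(p n))]
          _ = Real.exp (((k*(n-k):ℕ):ℝ) * (-(p n))) := by rw [← Real.exp_nat_mul]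
          _ = Real.exp (-(p n) * ((k:ℝ) * (N - (k:ℝ)))) := by rw [hcast]; ring_nf
      rcases le_or_gt (k:ℝ) (c * N) with hcase | hcase
      · -- small k
        have hchoose : (n.choose k : ℝ) ≤ N ^ k := by
          rw [hNdef]; exact_mod_cast Nat.choose_le_pow n k
        have hNk : N ^ k = Real.exp ((k:ℝ) * L) := by
          rw [hNL, ← Real.exp_nat_mul]
        have hNmk : (0:ℝ) ≤ N - (k:ℝ) := by linarith
        have e1 : (1+ε) * (k:ℝ) ≤ (ε/2) * N := by
          have h' := mul_le_mul_of_nonneg_left hcase (le_of_lt hε2)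
          have h'' : (1+ε) * (c * N) = (ε/2) * N := by
            rw [hc]; field_simp
          linarith
        have hstep : (1 + ε/2) * L ≤ p n * (N - (k:ℝ)) := by
          have e3 : (1+ε) * L * (N - (k:ℝ)) ≤ (N * p n) * (N - (k:ℝ)) :=
            mul_le_mul_of_nonneg_right hpn hNmk
          have e4 : (1 + ε/2) * L * N ≤ (1+ε) * L * (N - (k:ℝ)) := by
            have e2 : (1 + ε/2) * N ≤ (1+ε) * (N - (k:ℝ)) := by nlinarith
            nlinarith [mul_le_mul_of_nonneg_right e2 hL0]
          have e5 : (1 + ε/2) * L * N ≤ (p n * (N - (k:ℝ))) * N := by nlinarith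
          exact le_of_mul_le_mul_right e5 hN0
        have hkey : (k:ℝ) * L + (-(p n) * ((k:ℝ) * (N - (k:ℝ)))) ≤ (k:ℝ) * (-(ε/2) * L) := by
          nlinarith [mul_le_mul_of_nonneg_left hstep hK0]
        calc (n.choose k:ℝ) * (1-p n)^(k*(n-k))
            ≤ N^k * Real.exp (-(p n) * ((k:ℝ)*(N-(k:ℝ)))) :=
              mul_le_mul hchoose hqexp (pow_nonneg hq0 _) (by positivity)
          _ = Real.exp ((k:ℝ)*L + (-(p n) * ((k:ℝ)*(N-(k:ℝ))))) := by
              rw [hNk, ← Real.exp_add]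
          _ ≤ Real.exp ((k:ℝ) * (-(ε/2)*L)) := Real.exp_le_exp.2 hkey
          _ = r ^ k := by rw [hr, ← Real.exp_nat_mul]
          _ ≤ r^k + Real.exp (-(2*N)) := le_add_of_nonneg_right (Real.exp_nonneg _)
      · -- large k
        have hchoose : (n.choose k : ℝ) ≤ 2 ^ n := by
          exact_mod_cast aux_choose_le_two_pow n k
        have h2n : (2:ℝ)^n = Real.exp (N * Real.log 2) := by
          rw [hNdef, Real.exp_nat_mul, Real.exp_log (show (0:ℝ) < 2 by norm_num)]
        have hNk2 : N/2 ≤ N - (k:ℝ) := by linarith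
        have hprod : c * N * (N/2) ≤ (k:ℝ) * (N - (k:ℝ)) := by
          apply mul_le_mul hcase.le hNk2 (by positivity) hK0
        have hm : (ε/4) * (N * L) ≤ p n * ((k:ℝ) * (N - (k:ℝ))) := by
          have hA := mul_le_mul_of_nonneg_left hprod hp0
          have hB : (ε/4) * (N * L) ≤ p n * (c * N * (N/2)) := by
            have h' := mul_le_mul_of_nonneg_left hpn
              (show (0:ℝ) ≤ c * N / 2 by positivity)
            have hne : (1 + ε) ≠ 0 := ne_of_gt hε2
            have e : c * N / 2 * ((1+ε) * L) = (ε/4) * (N*L) := by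
              rw [hc]; field_simp; ring
            nlinarith [h', e]
          linarith
        have hexp : N * Real.log 2 + (-(p n) * ((k:ℝ) * (N - (k:ℝ)))) ≤ -(2*N) := by
          have hlog2 : Real.log 2 ≤ 1 := by
            linarith [Real.log_two_lt_d9]
          have h3 : (3:ℝ) ≤ (ε/4) * L := by linarith
          nlinarith [mul_le_mul_of_nonneg_left h3 hN0.le]
        calc (n.choose k:ℝ) * (1-p n)^(k*(n-k))
            ≤ (2:ℝ)^n * Real.exp (-(p n) * ((k:ℝ)*(N-(k:ℝ)))) :=
              mul_le_mul hchoose hqexp (pow_nonneg hq0 _) (by positivity)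
          _ = Real.exp (N * Real.log 2 + (-(p n) * ((k:ℝ)*(N-(k:ℝ))))) := by
              rw [h2n, ← Real.exp_add]
          _ ≤ Real.exp (-(2*N)) := Real.exp_le_exp.2 hexp
          _ ≤ r^k + Real.exp (-(2*N)) := le_add_of_nonneg_left (pow_nonneg hr0 _)
    -- sum the bound
    have hr1 : r < 1 := lt_of_le_of_lt hrhalf (by norm_num)
    have hgeom : ∑ k ∈ Finset.Icc 1 (n/2), r ^ k ≤ 2 * r := by
      have e1 : ∑ k ∈ Finset.Icc 1 (n/2), r ^ k = ∑ i ∈ Finset.range (n/2), r ^ (1 + i) := by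
        rw [← Finset.Ico_add_one_right_eq_Icc, Finset.sum_Ico_eq_sum_range]
        simp
      have e3 : ∑ i ∈ Finset.range (n/2), r ^ i ≤ 2 := by
        calc ∑ i ∈ Finset.range (n/2), r ^ i ≤ ∑' i : ℕ, r ^ i :=
            Summable.sum_le_tsum _ (fun i _ => pow_nonneg hr0 i)
              (summable_geometric_of_lt_one hr0 hr1)
          _ = (1 - r)⁻¹ := tsum_geometric_of_lt_one hr0 hr1
          _ ≤ 2 := by
              have h12 : (1:ℝ)/2 ≤ 1 - r := by linarith
              calc (1-r)⁻¹ ≤ ((1:ℝ)/2)⁻¹ := inv_anti₀ (by norm_num) h12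
                _ = 2 := by norm_num
      rw [e1]
      simp_rw [pow_add, pow_one, ← Finset.mul_sum]
      nlinarith
    have hcard : ((n/2 : ℕ):ℝ) * Real.exp (-(2*N)) ≤ Real.exp (-N) := by
      have h1 : ((n/2:ℕ):ℝ) ≤ N := by
        rw [hNdef]; exact_mod_cast Nat.div_le_self n 2
      have h2 : N ≤ Real.exp N := by linarith [Real.add_one_le_exp N]
      calc ((n/2:ℕ):ℝ) * Real.exp (-(2*N))
          ≤ Real.exp N * Real.exp (-(2*N)) :=
            mul_le_mul_of_nonneg_right (le_trans h1 h2) (Real.exp_nonneg _)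
        _ = Real.exp (-N) := by rw [← Real.exp_add]; ring_nf
    calc ∑ k ∈ Finset.Icc 1 (n/2), (n.choose k : ℝ) * (1 - p n) ^ (k * (n - k))
        ≤ ∑ k ∈ Finset.Icc 1 (n/2), (r ^ k + Real.exp (-(2*N))) :=
          Finset.sum_le_sum hterm
      _ = (∑ k ∈ Finset.Icc 1 (n/2), r ^ k) + ((n/2 : ℕ):ℝ) * Real.exp (-(2*N)) := by
          rw [Finset.sum_add_distrib, Finset.sum_const, Nat.card_Icc]
          simp [nsmul_eq_mul]
      _ ≤ 2 * r + Real.exp (-N) := add_le_add hgeom hcard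
  · have t1 : Tendsto (fun n : ℕ => Real.exp (-(ε/2) * Real.log n)) atTop (𝓝 0) := by
      apply Real.tendsto_exp_atBot.comp
      have h1 : Tendsto (fun n : ℕ => (ε/2) * Real.log n) atTop atTop :=
        hlogT.const_mul_atTop (by positivity)
      have h2 := tendsto_neg_atTop_atBot.comp h1
      refine h2.congr fun m => ?_
      show -((ε/2) * Real.log m) = -(ε/2) * Real.log m
      ring
    have t2 : Tendsto (fun n : ℕ => Real.exp (-(n:ℝ))) atTop (𝓝 0) :=
      Real.tendsto_exp_atBot.comp (tendsto_neg_atTop_atBot.comp tendsto_natCast_atTop_atTop)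
    have := (t1.const_mul 2).add t2
    simpa using this
end

section
/- Let k : ℕ → ℕ and suppose there is a constant C > 0 with k(n) ≤ C·√n for all n. Then strong detection is impossible: for every sequence of tests T_n : {0,1}ⁿ → {0,1}, liminf_{n→∞} [ P₀(T_n(Y) = 1) + P_{1,k(n)}(T_n(Y) = 0) ] > 0. Equivalently, limsup_{n→∞} d_TV(P₀, P_{1,k(n)}) < 1, where d_TV denotes total variation distance. -/
open scoped Classical

/-- Probability of an event `E ⊆ {0,1}ⁿ` under the null model `P₀`
(i.i.d. uniform bits). -/
noncomputable def nullP (n : ℕ) (E : Set (Fin n → Bool)) : ℝ :=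
  ∑ y ∈ Finset.univ.filter (fun y : Fin n → Bool => y ∈ E), (1 / 2 : ℝ) ^ n

/-- Probability of an event `E ⊆ {0,1}ⁿ` under the planted model `P_{1,k}`:
a set `S*` of `k` positions is chosen uniformly at random, the bits at positions
of `S*` are set to one, and the remaining `n−k` bits are i.i.d. uniform. -/
noncomputable def plantedP (n k : ℕ) (E : Set (Fin n → Bool)) : ℝ :=
  (n.choose k : ℝ)⁻¹ *
    ∑ S ∈ (Finset.univ : Finset (Fin n)).powersetCard k,
      ∑ y ∈ Finset.univ.filter
          (fun y : Fin n → Bool => y ∈ E ∧ ∀ i ∈ S, y i = true),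
        (1 / 2 : ℝ) ^ (n - k)

/-- Total variation distance between `P₀` and `P_{1,k}` on `{0,1}ⁿ`. -/
noncomputable def dTV (n k : ℕ) : ℝ :=
  (1 / 2 : ℝ) * ∑ y : Fin n → Bool, |nullP n {y} - plantedP n k {y}|

/-!
Relative to the uniform law, the planted law has density `2^k · C(|y|, k) / C(n, k)`, where `|y|`
is the number of ones of `y`. On the half-cube `2|y| ≤ n + k` this density is at most
`(1 + k/n)^k ≤ exp (k²/n) ≤ exp C²`, and the half-cube carries planted mass at least `1/2`:
given the planted set `S`, flipping every bit outside `S` exchanges `|y|` and `n + k - |y|`.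
Hence the overlap `∑ min (P₀{y}, P_{1,k}{y})` is at least `exp (-C²) / 2` for every `n`. It bounds
the total error of every test from below, and it equals `1 - d_TV`.
-/

namespace StrongDetection

open Finset Real

section Cube

variable {ι : Type*}

def ones [Fintype ι] (y : ι → Bool) : Finset ι := {i | y i = true}

def flipOff [DecidableEq ι] (S : Finset ι) (y : ι → Bool) : ι → Bool :=
  fun i => if i ∈ S then y i else !y i

lemma flipOff_involutive [DecidableEq ι] (S : Finset ι) : Function.Involutive (flipOff S) := by
  intro y
  funext i
  by_cases hi : i ∈ S <;> simp [flipOff, hi]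

lemma card_filter_forall_mem_eq_true [Fintype ι] [DecidableEq ι] (S : Finset ι)
    [DecidablePred fun y : ι → Bool => ∀ i ∈ S, y i = true] :
    #{y : ι → Bool | ∀ i ∈ S, y i = true} = 2 ^ (Fintype.card ι - #S) := by
  have hpi : ({y : ι → Bool | ∀ i ∈ S, y i = true} : Finset _) =
      Fintype.piFinset fun i => if i ∈ S then {true} else univ := by
    ext y
    simp only [mem_filter, mem_univ, true_and, Fintype.mem_piFinset]
    refine forall_congr' fun i => ?_
    by_cases hi : i ∈ S <;> simp [hi]
  rw [hpi, Fintype.card_piFinset]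
  simp [apply_ite, prod_ite, ← card_compl, compl_eq_univ_sdiff, filter_not]

lemma card_ones_flipOff_add [Fintype ι] [DecidableEq ι] {S : Finset ι} {y : ι → Bool}
    (hy : ∀ i ∈ S, y i = true) :
    #(ones (flipOff S y)) + #(ones y) = Fintype.card ι + #S := by
  calc #(ones (flipOff S y)) + #(ones y)
      = ∑ i, (1 + if i ∈ S then 1 else 0) := by
        simp only [ones, card_filter, ← sum_add_distrib]
        refine sum_congr rfl fun i _ => ?_
        by_cases hi : i ∈ S
        · simp [flipOff, hi, hy i hi]
        · cases h : y i <;> simp [flipOff, hi, h]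
    _ = Fintype.card ι + #S := by simp [sum_add_distrib]

lemma card_forall_mem_eq_true_le_two_mul [Fintype ι] [DecidableEq ι] (S : Finset ι) :
    2 ^ (Fintype.card ι - #S) ≤
      2 * #{y : ι → Bool | 2 * #(ones y) ≤ Fintype.card ι + #S ∧ ∀ i ∈ S, y i = true} := by
  set F : Finset (ι → Bool) := {y | ∀ i ∈ S, y i = true}
  set light : (ι → Bool) → Prop := fun y => 2 * #(ones y) ≤ Fintype.card ι + #S
  have hF : #F = 2 ^ (Fintype.card ι - #S) := card_filter_forall_mem_eq_true S
  have hsplit : #{y ∈ F | light y} + #{y ∈ F | ¬ light y} = #F :=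
    card_filter_add_card_filter_not _
  have hflip : #{y ∈ F | ¬ light y} ≤ #{y ∈ F | light y} := by
    refine card_le_card_of_injOn (flipOff S) (fun y hy => ?_)
      (flipOff_involutive S).injective.injOn
    simp only [F, light, coe_filter, mem_filter, mem_univ, true_and, Set.mem_ofPred_eq] at hy ⊢
    have hw := card_ones_flipOff_add hy.1
    exact ⟨fun i hi => by simp [flipOff, hi, hy.1 i hi], by omega⟩
  have hlight : {y ∈ F | light y} =
      ({y : ι → Bool | light y ∧ ∀ i ∈ S, y i = true} : Finset (ι → Bool)) := by
    simp only [F, filter_filter, and_comm]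
  rw [← hlight]
  omega

end Cube

lemma two_pow_mul_descFactorial_le {n k m : ℕ} (hk : k ≤ n) (hm : 2 * m ≤ n + k) :
    ∀ j ≤ k, 2 ^ j * m.descFactorial j * n ^ j ≤ (n + k) ^ j * n.descFactorial j
  | 0, _ => by simp
  | j + 1, hj => by
    -- factorwise: `(m - j) / (n - j) ≤ (n + k) / (2n)`
    have hstep : 2 * (m - j) * n ≤ (n + k) * (n - j) := by
      rcases le_or_gt j m with hjm | hjm
      · have hjn : j ≤ n := by omega
        zify [hjm, hjn]
        nlinarith
      · simp [Nat.sub_eq_zero_of_le hjm.le]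
    calc 2 ^ (j + 1) * m.descFactorial (j + 1) * n ^ (j + 1)
        = (2 * (m - j) * n) * (2 ^ j * m.descFactorial j * n ^ j) := by
          rw [Nat.descFactorial_succ]; ring
      _ ≤ ((n + k) * (n - j)) * ((n + k) ^ j * n.descFactorial j) :=
          Nat.mul_le_mul hstep (two_pow_mul_descFactorial_le hk hm j (by omega))
      _ = (n + k) ^ (j + 1) * n.descFactorial (j + 1) := by
          rw [Nat.descFactorial_succ]; ring

lemma two_pow_mul_choose_le {n k m : ℕ} (hk : k ≤ n) (hm : 2 * m ≤ n + k) :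
    2 ^ k * m.choose k * n ^ k ≤ (n + k) ^ k * n.choose k := by
  have h := two_pow_mul_descFactorial_le hk hm k le_rfl
  simp only [Nat.descFactorial_eq_factorial_mul_choose] at h
  refine Nat.le_of_mul_le_mul_left ?_ k.factorial_pos
  calc k.factorial * (2 ^ k * m.choose k * n ^ k)
      = 2 ^ k * (k.factorial * m.choose k) * n ^ k := by ring
    _ ≤ (n + k) ^ k * (k.factorial * n.choose k) := h
    _ = k.factorial * ((n + k) ^ k * n.choose k) := by ring

lemma add_pow_le_exp_mul_pow {x a D : ℝ} {k : ℕ} (hx : 0 < x) (ha : 0 ≤ a)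
    (h : k * a ≤ D * x) : (x + a) ^ k ≤ exp D * x ^ k := by
  calc (x + a) ^ k = (a / x + 1) ^ k * x ^ k := by
        rw [← mul_pow, add_mul, div_mul_cancel₀ _ hx.ne', one_mul, add_comm]
    _ ≤ exp (a / x) ^ k * x ^ k := by gcongr; exact add_one_le_exp _
    _ = exp (k * a / x) * x ^ k := by rw [← exp_nat_mul, mul_div_assoc]
    _ ≤ exp D * x ^ k := by gcongr; rwa [div_le_iff₀ hx]

lemma two_pow_mul_choose_le_exp_mul_choose {n k m : ℕ} {D : ℝ} (hk : k ≤ n)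
    (hm : 2 * m ≤ n + k) (hD₀ : 0 ≤ D) (hD : (k : ℝ) ^ 2 ≤ D * n) :
    2 ^ k * (m.choose k : ℝ) ≤ exp D * n.choose k := by
  rcases Nat.eq_zero_or_pos n with rfl | hn
  · obtain rfl : k = 0 := by omega
    simpa using one_le_exp hD₀
  have hn' : (0 : ℝ) < n := by exact_mod_cast hn
  have hnat : (2 ^ k * m.choose k * n ^ k : ℝ) ≤ (n + k) ^ k * n.choose k := by
    exact_mod_cast two_pow_mul_choose_le hk hm
  have hexp : ((n : ℝ) + k) ^ k ≤ exp D * n ^ k :=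
    add_pow_le_exp_mul_pow hn' (Nat.cast_nonneg k) (by rw [← sq]; exact hD)
  refine le_of_mul_le_mul_right ?_ (pow_pos hn' k)
  calc 2 ^ k * (m.choose k : ℝ) * n ^ k ≤ (n + k) ^ k * n.choose k := hnat
    _ ≤ exp D * n ^ k * n.choose k := by gcongr
    _ = exp D * n.choose k * n ^ k := by ring

noncomputable def plantedDensity (n k : ℕ) (y : Fin n → Bool) : ℝ :=
  (n.choose k : ℝ)⁻¹ * ((#(ones y)).choose k * (1 / 2) ^ (n - k))

lemma plantedDensity_nonneg (n k : ℕ) (y : Fin n → Bool) : 0 ≤ plantedDensity n k y := by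
  unfold plantedDensity
  positivity

lemma plantedP_eq_sum_plantedDensity (n k : ℕ) (E : Set (Fin n → Bool)) :
    plantedP n k E = ∑ y ∈ univ.filter (· ∈ E), plantedDensity n k y := by
  rw [plantedP, sum_comm' (t' := univ.filter (· ∈ E)) (s' := fun y => powersetCard k (ones y))]
  · simp only [plantedDensity, sum_const, card_powersetCard, nsmul_eq_mul, mul_sum]
  · intro S y
    simp only [mem_powersetCard, mem_filter, mem_univ, true_and, ones, subset_iff]
    tauto

lemma plantedP_singleton (n k : ℕ) (y : Fin n → Bool) :
    plantedP n k {y} = plantedDensity n k y := by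
  simp [plantedP_eq_sum_plantedDensity, filter_eq']

lemma nullP_singleton (n : ℕ) (y : Fin n → Bool) : nullP n {y} = (1 / 2) ^ n := by
  simp [nullP, filter_eq']

lemma sum_plantedP_singleton (n k : ℕ) (E : Set (Fin n → Bool)) :
    ∑ y ∈ univ.filter (· ∈ E), plantedP n k {y} = plantedP n k E := by
  rw [plantedP_eq_sum_plantedDensity]
  simp only [plantedP_singleton]

lemma sum_nullP_singleton (n : ℕ) (E : Set (Fin n → Bool)) :
    ∑ y ∈ univ.filter (· ∈ E), nullP n {y} = nullP n E := by
  simp only [nullP_singleton]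
  rfl

lemma nullP_univ (n : ℕ) : nullP n Set.univ = 1 := by
  simp [nullP]

lemma plantedP_univ {n k : ℕ} (hk : k ≤ n) : plantedP n k Set.univ = 1 := by
  have hc : (n.choose k : ℝ) ≠ 0 := by exact_mod_cast (Nat.choose_pos hk).ne'
  rw [plantedP, sum_congr rfl (g := fun _ => 1) fun S hS => ?_]
  · simp [hc]
  · rw [mem_powersetCard_univ] at hS
    simp only [Set.mem_univ, true_and]
    rw [sum_const, card_filter_forall_mem_eq_true]
    simp [hS]

lemma half_le_plantedP_card_ones_le {n k : ℕ} (hk : k ≤ n) :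
    1 / 2 ≤ plantedP n k {y | 2 * #(ones y) ≤ n + k} := by
  have hc : (0 : ℝ) < n.choose k := by exact_mod_cast Nat.choose_pos hk
  rw [plantedP, le_inv_mul_iff₀ hc]
  refine le_trans ?_ (card_nsmul_le_sum _ _ (1 / 2) fun S hS => ?_)
  · simp
  · rw [mem_powersetCard_univ] at hS
    have h := card_forall_mem_eq_true_le_two_mul S
    simp only [Fintype.card_fin, hS] at h
    simp only [Set.mem_ofPred_eq]
    rw [sum_const, nsmul_eq_mul, one_div_pow, ← div_eq_mul_one_div, le_div_iff₀ (by positivity)]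
    have h' := (Nat.cast_le (α := ℝ)).2 h
    push_cast at h'
    linarith

lemma plantedDensity_le {n k : ℕ} {D : ℝ} (hk : k ≤ n) (hD₀ : 0 ≤ D)
    (hD : (k : ℝ) ^ 2 ≤ D * n) {y : Fin n → Bool} (hy : 2 * #(ones y) ≤ n + k) :
    plantedDensity n k y ≤ exp D * (1 / 2) ^ n := by
  have hc : (0 : ℝ) < n.choose k := by exact_mod_cast Nat.choose_pos hk
  have hratio := two_pow_mul_choose_le_exp_mul_choose hk hy hD₀ hD
  rw [plantedDensity, inv_mul_le_iff₀ hc]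
  calc ((#(ones y)).choose k : ℝ) * (1 / 2) ^ (n - k)
      = 2 ^ k * ((#(ones y)).choose k : ℝ) * (1 / 2) ^ n := by
        rw [show (1 / 2 : ℝ) ^ n = (1 / 2) ^ (n - k) * (1 / 2) ^ k by
          rw [← pow_add, Nat.sub_add_cancel hk]]
        rw [one_div, inv_pow, inv_pow]
        field_simp
    _ ≤ exp D * n.choose k * (1 / 2) ^ n := by gcongr
    _ = n.choose k * (exp D * (1 / 2) ^ n) := by ring

lemma sum_nullP_singleton_univ (n : ℕ) : ∑ y : Fin n → Bool, nullP n {y} = 1 := by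
  simpa [nullP_univ] using sum_nullP_singleton n Set.univ

lemma sum_plantedP_singleton_univ {n k : ℕ} (hk : k ≤ n) :
    ∑ y : Fin n → Bool, plantedP n k {y} = 1 := by
  simpa [plantedP_univ hk] using sum_plantedP_singleton n k Set.univ

lemma nullP_le_one (n : ℕ) (E : Set (Fin n → Bool)) : nullP n E ≤ 1 := by
  rw [← sum_nullP_singleton, ← sum_nullP_singleton_univ n]
  exact sum_le_univ_sum_of_nonneg fun y => by rw [nullP_singleton]; positivity

lemma plantedP_le_one {n k : ℕ} (hk : k ≤ n) (E : Set (Fin n → Bool)) : plantedP n k E ≤ 1 := by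
  rw [← sum_plantedP_singleton, ← sum_plantedP_singleton_univ hk]
  exact sum_le_univ_sum_of_nonneg fun y => by
    rw [plantedP_singleton]; exact plantedDensity_nonneg n k y

noncomputable def overlap (n k : ℕ) : ℝ :=
  ∑ y : Fin n → Bool, min (nullP n {y}) (plantedP n k {y})

lemma dTV_eq_one_sub_overlap {n k : ℕ} (hk : k ≤ n) : dTV n k = 1 - overlap n k := by
  have habs : ∀ a b : ℝ, |a - b| = a + b - 2 * min a b := fun a b => by
    linarith [max_sub_min_eq_abs' a b, min_add_max a b]
  simp only [dTV, overlap, habs, sum_sub_distrib, sum_add_distrib, ← mul_sum,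
    sum_nullP_singleton_univ, sum_plantedP_singleton_univ hk]
  ring

lemma overlap_le_nullP_add_plantedP_compl (n k : ℕ) (E : Set (Fin n → Bool)) :
    overlap n k ≤ nullP n E + plantedP n k Eᶜ := by
  rw [← sum_nullP_singleton, ← sum_plantedP_singleton, sum_filter, sum_filter,
    ← sum_add_distrib]
  refine sum_le_sum fun y _ => ?_
  by_cases hy : y ∈ E <;> simp [hy]

lemma exp_neg_mul_plantedP_le_overlap {n k : ℕ} {D : ℝ} (hD₀ : 0 ≤ D) (A : Set (Fin n → Bool))
    (hA : ∀ y ∈ A, plantedDensity n k y ≤ exp D * (1 / 2) ^ n) :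
    exp (-D) * plantedP n k A ≤ overlap n k := by
  have hmin : ∀ y ∈ univ.filter (· ∈ A),
      exp (-D) * plantedP n k {y} ≤ min (nullP n {y}) (plantedP n k {y}) := by
    intro y hy
    rw [nullP_singleton, plantedP_singleton, exp_neg]
    refine le_min ?_ ?_
    · rw [inv_mul_le_iff₀ (exp_pos D)]
      exact hA y (mem_filter.1 hy).2
    · exact mul_le_of_le_one_left (plantedDensity_nonneg n k y)
        (inv_le_one_of_one_le₀ (one_le_exp hD₀))
  calc exp (-D) * plantedP n k A
      = ∑ y ∈ univ.filter (· ∈ A), exp (-D) * plantedP n k {y} := by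
        rw [← sum_plantedP_singleton, mul_sum]
    _ ≤ ∑ y ∈ univ.filter (· ∈ A), min (nullP n {y}) (plantedP n k {y}) := sum_le_sum hmin
    _ ≤ overlap n k := sum_le_univ_sum_of_nonneg fun y => by
        rw [nullP_singleton, plantedP_singleton]
        exact le_min (by positivity) (plantedDensity_nonneg n k y)

lemma exp_neg_div_two_le_overlap {n k : ℕ} {D : ℝ} (hk : k ≤ n) (hD₀ : 0 ≤ D)
    (hD : (k : ℝ) ^ 2 ≤ D * n) : exp (-D) / 2 ≤ overlap n k := by
  calc exp (-D) / 2 ≤ exp (-D) * plantedP n k {y | 2 * #(ones y) ≤ n + k} := by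
        rw [div_eq_mul_one_div]
        gcongr
        exact half_le_plantedP_card_ones_le hk
    _ ≤ overlap n k :=
        exp_neg_mul_plantedP_le_overlap hD₀ _ fun y hy => plantedDensity_le hk hD₀ hD hy

end StrongDetection

open Filter Real StrongDetection

theorem stmt_8_general (k : ℕ → ℕ) (hk : ∀ n, k n ≤ n) (C : ℝ)
    (hbound : ∀ n : ℕ, (k n : ℝ) ≤ C * Real.sqrt n) :
    (∀ T : (n : ℕ) → (Fin n → Bool) → Bool,
      0 < Filter.liminf
        (fun n : ℕ => nullP n {y | T n y = true} + plantedP n (k n) {y | T n y = false})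
        Filter.atTop)
    ∧ Filter.limsup (fun n : ℕ => dTV n (k n)) Filter.atTop < 1 := by
  have hD n : (k n : ℝ) ^ 2 ≤ C ^ 2 * n := by
    calc (k n : ℝ) ^ 2 ≤ (C * Real.sqrt n) ^ 2 := by gcongr; exact hbound n
      _ = C ^ 2 * n := by rw [mul_pow, sq_sqrt n.cast_nonneg]
  have hoverlap n : exp (-C ^ 2) / 2 ≤ overlap n (k n) :=
    exp_neg_div_two_le_overlap (hk n) (sq_nonneg C) (hD n)
  have hpos : 0 < exp (-C ^ 2) / 2 := by positivity
  refine ⟨fun T => hpos.trans_le (le_liminf_of_le ?_ (.of_forall fun n => ?_)), ?_⟩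
  · refine isCoboundedUnder_ge_of_le _ (x := 2) fun n => ?_
    linarith [nullP_le_one n {y | T n y = true}, plantedP_le_one (hk n) {y | T n y = false}]
  · have hcompl : {y | T n y = false} = {y | T n y = true}ᶜ := by ext; simp
    rw [hcompl]
    exact (hoverlap n).trans (overlap_le_nullP_add_plantedP_compl n (k n) _)
  · refine lt_of_le_of_lt (limsup_le_of_le ?_ (.of_forall fun n => ?_)) (sub_lt_self 1 hpos)
    · exact isCoboundedUnder_le_of_le _ (x := 0) fun n => by unfold dTV; positivity
    · linarith [dTV_eq_one_sub_overlap (hk n), hoverlap n]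

/-- If `k(n) ≤ C·√n`, then strong detection is impossible: every sequence of tests
has total error bounded away from `0` along `n → ∞`; equivalently, the total
variation distance between the null and planted models stays bounded away from `1`. -/
theorem stmt_8 (k : ℕ → ℕ) (hk : ∀ n, k n ≤ n) (C : ℝ) (hC : 0 < C)
    (hbound : ∀ n : ℕ, (k n : ℝ) ≤ C * Real.sqrt n) :
    (∀ T : (n : ℕ) → (Fin n → Bool) → Bool,
      0 < Filter.liminf
        (fun n : ℕ => nullP n {y | T n y = true} + plantedP n (k n) {y | T n y = false})
        Filter.atTop)
    ∧ Filter.limsup (fun n : ℕ => dTV n (k n)) Filter.atTop < 1 :=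
  stmt_8_general k hk C hbound
end
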